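/- Let Γ be the numerical semigroup strictly generated by r₀, …, r_h with divisor sequence θ_j = gcd(r₀,…,r_{j-1}), θ₁ > ⋯ > θ_{h+1} = 1. Then the number of elements of Γ below the conductor c = −r₀ + 1 + Σ_{j=1}^h r_j(θ_j/θ_{j+1} − 1) equals c/2. -/

import Mathlib

/-!
Write `θ j = prefixGcd r j` and `e j = θ j / θ (j + 1)`. Since `gcd (θ j) (r j) = θ (j + 1)` and
`θ (h + 1) = 1`, every integer `z` has an expansion `z = a₀ r₀ + ∑_{j=1}^h a j * r j` with
`a₀ ∈ ℤ` and standard digits `0 ≤ a j < e j`. Strict generation makes every standard digit sum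
of level `n` smaller than `r (n + 1)`; comparing top digits then shows that `z ∈ Γ` iff `a₀ ≥ 0`,
i.e. iff the digit sum is at most `z`. Replacing each digit `a j` by `e j - 1 - a j` yields the
expansion of `c - 1 - z` and exchanges `a₀ ≥ 0` with `a₀ < 0`, so `z ↦ c - 1 - z` swaps `Γ` and
its complement in `[0, c)`.
-/

open Finset

theorem Int.exists_lt_mul_modEq_of_gcd_dvd {m c : ℕ} (hm : 0 < m) {z : ℤ}
    (hz : (Nat.gcd m c : ℤ) ∣ z) :
    ∃ t : ℕ, t < m / Nat.gcd m c ∧ (t : ℤ) * c ≡ z [ZMOD m] := by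
  obtain ⟨q, rfl⟩ := hz
  set g := Nat.gcd m c
  set e := m / g
  have he : (0 : ℤ) < e := by
    exact_mod_cast Nat.div_pos (Nat.gcd_le_left c hm) (Nat.gcd_pos_of_pos_left c hm)
  set w : ℤ := q * Nat.gcdB m c
  have hw₀ : 0 ≤ w % e := Int.emod_nonneg _ he.ne'
  have hwe : w % e < e := Int.emod_lt_of_pos _ he
  refine ⟨(w % e).toNat, by omega, ?_⟩
  have hmc : (m : ℤ) ∣ e * c := by
    rw [← Nat.div_mul_cancel (Nat.gcd_dvd_left m c)]
    exact_mod_cast Nat.mul_dvd_mul_left e (Nat.gcd_dvd_right m c)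
  have hwc : w * c ≡ g * q [ZMOD m] := by
    rw [Int.modEq_iff_dvd]
    exact ⟨q * Nat.gcdA m c, by rw [Nat.gcd_eq_gcd_ab]; ring⟩
  rw [Int.toNat_of_nonneg hw₀]
  exact (((Int.mod_modEq w e).mul_right' (c := c)).of_dvd hmc).trans hwc

theorem two_mul_ncard_of_iff_not_reflect {P : ℕ → Prop} {c : ℕ}
    (hP : ∀ z < c, P z ↔ ¬ P (c - 1 - z)) : 2 * {z | z < c ∧ P z}.ncard = c := by
  classical
  have hset : {z | z < c ∧ P z} = ↑((range c).filter P) := by ext; simp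
  have hswap : ((range c).filter P).card = ((range c).filter (fun z => ¬ P z)).card := by
    refine card_nbij' (fun z => c - 1 - z) (fun z => c - 1 - z) ?_ ?_ ?_ ?_ <;>
      intro z hz <;> simp only [coe_filter, mem_range, Set.mem_ofPred_eq] at hz ⊢
    · exact ⟨by omega, (hP z hz.1).1 hz.2⟩
    · refine ⟨by omega, ?_⟩
      rw [hP _ (by omega), Nat.sub_sub_self (by omega)]
      exact hz.2
    · omega
    · omega
  rw [hset, Set.ncard_coe_finset, two_mul]
  nth_rw 2 [hswap]
  rw [card_filter_add_card_filter_not, card_range]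

namespace StrictlyGenerated

variable (r : ℕ → ℕ)

def prefixGcd (j : ℕ) : ℕ := (range j).gcd r

def ratio (j : ℕ) : ℕ := prefixGcd r j / prefixGcd r (j + 1)

def digitSum (n : ℕ) (a : ℕ → ℕ) : ℕ := ∑ j ∈ Icc 1 n, a j * r j

def IsStandard (n : ℕ) (a : ℕ → ℕ) : Prop := ∀ j ∈ Icc 1 n, a j < ratio r j

def InSemigroup (n z : ℕ) : Prop := ∃ b : ℕ → ℕ, z = ∑ j ∈ range (n + 1), b j * r j

variable {r}

theorem prefixGcd_dvd {i j : ℕ} (hij : i < j) : prefixGcd r j ∣ r i :=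
  Finset.gcd_dvd (mem_range.2 hij)

theorem prefixGcd_succ (j : ℕ) : prefixGcd r (j + 1) = Nat.gcd (prefixGcd r j) (r j) := by
  rw [prefixGcd, range_add_one, gcd_insert, Nat.gcd_comm]
  rfl

theorem prefixGcd_pos (h0 : 0 < r 0) {j : ℕ} (hj : 1 ≤ j) : 0 < prefixGcd r j :=
  Nat.pos_of_dvd_of_pos (prefixGcd_dvd hj) h0

theorem ratio_pos (h0 : 0 < r 0) {j : ℕ} (hj : 1 ≤ j) : 0 < ratio r j := by
  rw [ratio, prefixGcd_succ]
  have := prefixGcd_pos h0 hj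
  exact Nat.div_pos (Nat.gcd_le_left _ this) (Nat.gcd_pos_of_pos_left _ this)

theorem prefixGcd_dvd_digitSum (n : ℕ) (a : ℕ → ℕ) : prefixGcd r (n + 1) ∣ digitSum r n a :=
  dvd_sum fun j hj => dvd_mul_of_dvd_right (prefixGcd_dvd (by grind)) _

theorem digitSum_succ (n : ℕ) (a : ℕ → ℕ) :
    digitSum r (n + 1) a = digitSum r n a + a (n + 1) * r (n + 1) :=
  sum_Icc_succ_top (by omega) _

theorem digitSum_congr {n : ℕ} {a b : ℕ → ℕ} (h : ∀ j ∈ Icc 1 n, a j = b j) :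
    digitSum r n a = digitSum r n b :=
  sum_congr rfl fun j hj => by rw [h j hj]

theorem sum_range_succ_eq_add_digitSum (n : ℕ) (b : ℕ → ℕ) :
    ∑ j ∈ range (n + 1), b j * r j = b 0 * r 0 + digitSum r n b := by
  induction n with
  | zero => simp [digitSum]
  | succ n ih => rw [sum_range_succ, ih, digitSum_succ]; ring

theorem IsStandard.mono {m n : ℕ} {a : ℕ → ℕ} (ha : IsStandard r n a) (hmn : m ≤ n) :
    IsStandard r m a :=
  fun j hj => ha j (Icc_subset_Icc_right hmn hj)

theorem exists_isStandard_digitSum_modEq (h0 : 0 < r 0) (n : ℕ) (z : ℤ)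
    (hz : (prefixGcd r (n + 1) : ℤ) ∣ z) :
    ∃ a, IsStandard r n a ∧ (digitSum r n a : ℤ) ≡ z [ZMOD r 0] := by
  induction n generalizing z with
  | zero =>
    refine ⟨0, fun j hj => by grind, ?_⟩
    simpa [digitSum, prefixGcd, Int.modEq_iff_dvd] using hz
  | succ n ih =>
    obtain ⟨t, ht, htz⟩ := Int.exists_lt_mul_modEq_of_gcd_dvd (prefixGcd_pos h0 n.succ_pos)
      (z := z) (by rwa [← prefixGcd_succ])
    obtain ⟨a, ha, haz⟩ := ih (z - t * r (n + 1)) htz.dvd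
    refine ⟨Function.update a (n + 1) t, fun j hj => ?_, ?_⟩
    · rcases eq_or_ne j (n + 1) with rfl | hne
      · rw [Function.update_self]
        rwa [← prefixGcd_succ] at ht
      · rw [Function.update_of_ne hne]
        exact ha j (by grind)
    · rw [digitSum_succ, Function.update_self,
        digitSum_congr fun j hj => Function.update_of_ne (by grind) _ _]
      push_cast
      simpa using haz.add_right (t * r (n + 1))

theorem modEq_ratio_of_digitSum_modEq (h0 : 0 < r 0) {n x b : ℕ} {a : ℕ → ℕ}
    (hx : prefixGcd r (n + 1) ∣ x) (h : digitSum r (n + 1) a ≡ x + b * r (n + 1) [MOD r 0]) :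
    a (n + 1) ≡ b [MOD ratio r (n + 1)] := by
  have h' := h.of_dvd (prefixGcd_dvd n.succ_pos)
  rw [digitSum_succ] at h'
  have hlow : digitSum r n a ≡ x [MOD prefixGcd r (n + 1)] :=
    (Nat.modEq_zero_iff_dvd.2 (prefixGcd_dvd_digitSum n a)).trans
      (Nat.modEq_zero_iff_dvd.2 hx).symm
  have := (hlow.add_left_cancel h').cancel_right_div_gcd (prefixGcd_pos h0 n.succ_pos)
  rwa [← prefixGcd_succ] at this

theorem digitSum_lt_of_isStandard (hr1 : 0 < r 1) {n : ℕ}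
    (hgrow : ∀ j, 1 ≤ j → j ≤ n → ratio r j * r j < r (j + 1)) {a : ℕ → ℕ}
    (ha : IsStandard r n a) : digitSum r n a < r (n + 1) := by
  induction n with
  | zero => simpa [digitSum] using hr1
  | succ n ih =>
    have hlow := ih (fun j hj hjn => hgrow j hj (by omega)) (ha.mono n.le_succ)
    have htop : (a (n + 1) + 1) * r (n + 1) ≤ ratio r (n + 1) * r (n + 1) :=
      Nat.mul_le_mul_right _ (ha (n + 1) (by simp))
    have := hgrow (n + 1) (by omega) le_rfl
    rw [digitSum_succ]
    rw [add_one_mul] at htop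
    omega

theorem digitSum_le_of_modEq {n : ℕ} (hpos : ∀ j ≤ n, 0 < r j)
    (hgrow : ∀ j, 1 ≤ j → j + 1 ≤ n → ratio r j * r j < r (j + 1)) {a b : ℕ → ℕ}
    (ha : IsStandard r n a) (hab : digitSum r n a ≡ ∑ j ∈ range (n + 1), b j * r j [MOD r 0]) :
    digitSum r n a ≤ ∑ j ∈ range (n + 1), b j * r j := by
  induction n with
  | zero => simp [digitSum]
  | succ n ih =>
    rw [sum_range_succ] at hab ⊢
    set x := ∑ j ∈ range (n + 1), b j * r j
    have hx : prefixGcd r (n + 1) ∣ x :=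
      dvd_sum fun j hj => dvd_mul_of_dvd_right (prefixGcd_dvd (mem_range.1 hj)) _
    have htop := modEq_ratio_of_digitSum_modEq (hpos 0 (by omega)) hx hab
    have hle : a (n + 1) ≤ b (n + 1) :=
      htop.le_of_lt_add (by have := ha (n + 1) (by simp); omega)
    rw [digitSum_succ] at hab ⊢
    rcases hle.eq_or_lt with heq | hlt
    · rw [heq] at hab ⊢
      have := ih (fun j hj => hpos j (by omega)) (fun j h1 h2 => hgrow j h1 (by omega))
        (ha.mono n.le_succ) (Nat.ModEq.add_right_cancel' _ hab)
      omega
    -- a larger top digit outweighs every standard digit sum of lower level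
    · have hlow := digitSum_lt_of_isStandard (hpos 1 (by omega))
        (fun j h1 h2 => hgrow j h1 (by omega)) (ha.mono n.le_succ)
      have : (a (n + 1) + 1) * r (n + 1) ≤ b (n + 1) * r (n + 1) := Nat.mul_le_mul_right _ hlt
      rw [add_one_mul] at this
      omega

theorem IsStandard.compl {n : ℕ} {a : ℕ → ℕ} (ha : IsStandard r n a) :
    IsStandard r n (fun j => ratio r j - 1 - a j) :=
  fun j hj => by have := ha j hj; dsimp only; omega

theorem digitSum_compl_add {n : ℕ} {a : ℕ → ℕ} (ha : IsStandard r n a) :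
    digitSum r n (fun j => ratio r j - 1 - a j) + digitSum r n a =
      digitSum r n (fun j => ratio r j - 1) := by
  rw [digitSum, digitSum, digitSum, ← sum_add_distrib]
  exact sum_congr rfl fun j hj => by
    rw [← add_mul, Nat.sub_add_cancel (by have := ha j hj; omega)]

theorem inSemigroup_iff_digitSum_le {n z : ℕ} (hpos : ∀ j ≤ n, 0 < r j)
    (hgrow : ∀ j, 1 ≤ j → j + 1 ≤ n → ratio r j * r j < r (j + 1)) {a : ℕ → ℕ}
    (ha : IsStandard r n a) (hz : digitSum r n a ≡ z [MOD r 0]) :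
    InSemigroup r n z ↔ digitSum r n a ≤ z := by
  constructor
  · rintro ⟨b, rfl⟩
    exact digitSum_le_of_modEq hpos hgrow ha hz
  · intro hle
    obtain ⟨k, hk⟩ := (Nat.modEq_iff_exists_eq_add hle).1 hz
    refine ⟨Function.update a 0 k, ?_⟩
    rw [sum_range_succ_eq_add_digitSum, Function.update_self,
      digitSum_congr fun j hj => Function.update_of_ne (by grind) _ _, hk]
    ring

theorem inSemigroup_iff_not_inSemigroup_reflect {n : ℕ} (hpos : ∀ j ≤ n, 0 < r j)
    (hgrow : ∀ j, 1 ≤ j → j + 1 ≤ n → ratio r j * r j < r (j + 1))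
    (hone : prefixGcd r (n + 1) = 1) {c z : ℕ}
    (hc : c + r 0 = digitSum r n (fun j => ratio r j - 1) + 1) (hz : z < c) :
    InSemigroup r n z ↔ ¬ InSemigroup r n (c - 1 - z) := by
  obtain ⟨a, ha, haz⟩ :=
    exists_isStandard_digitSum_modEq (hpos 0 (Nat.zero_le n)) n z (by simp [hone])
  rw [Int.natCast_modEq_iff] at haz
  have hsum := digitSum_compl_add ha
  have hrefl : digitSum r n (fun j => ratio r j - 1 - a j) ≡ c - 1 - z [MOD r 0] := by
    refine Nat.ModEq.add_right_cancel' (z + r 0) ?_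
    rw [show c - 1 - z + (z + r 0) = digitSum r n (fun j => ratio r j - 1) by omega, ← hsum]
    exact (Nat.add_modEq_right.trans haz.symm).add_left _
  rw [inSemigroup_iff_digitSum_le hpos hgrow ha haz,
    inSemigroup_iff_digitSum_le hpos hgrow ha.compl hrefl]
  constructor
  · intro hle
    have := hpos 0 (Nat.zero_le n)
    omega
  · intro hgt
    by_contra hlt
    have := haz.symm.add_le_of_lt (not_le.1 hlt)
    omega

end StrictlyGenerated

open StrictlyGenerated

theorem strictly_generated_semigroup_count_below_conductor_general (h : ℕ)
    (r θ : ℕ → ℕ) (c : ℕ)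
    (hpos : ∀ j, j ≤ h → 0 < r j)
    (hθ : ∀ j, 1 ≤ j → j ≤ h + 1 → θ j = (Finset.range j).gcd r)
    (hone : θ (h + 1) = 1)
    (hstrict : ∀ j, 1 ≤ j → j + 1 ≤ h → (θ j / θ (j + 1)) * r j < r (j + 1))
    (hcval : (c : ℤ) = -(r 0 : ℤ) + 1 +
        ∑ j ∈ Finset.Icc 1 h, (r j : ℤ) * ((θ j / θ (j + 1) : ℕ) - 1 : ℤ)) :
    2 * {z : ℕ | z < c ∧
        ∃ a : ℕ → ℕ, z = ∑ j ∈ Finset.range (h + 1), a j * r j}.ncard = c := by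
  have hratio : ∀ j, 1 ≤ j → j ≤ h → θ j / θ (j + 1) = ratio r j := fun j h1 h2 => by
    rw [hθ j h1 (by omega), hθ (j + 1) (by omega) (by omega)]
    rfl
  have hgrow : ∀ j, 1 ≤ j → j + 1 ≤ h → ratio r j * r j < r (j + 1) := fun j h1 h2 =>
    hratio j h1 (by omega) ▸ hstrict j h1 h2
  have hc : c + r 0 = digitSum r h (fun j => ratio r j - 1) + 1 := by
    have hcast : (digitSum r h (fun j => ratio r j - 1) : ℤ) =
        ∑ j ∈ Icc 1 h, (r j : ℤ) * ((θ j / θ (j + 1) : ℕ) - 1 : ℤ) := by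
      simp only [digitSum, Nat.cast_sum, Nat.cast_mul]
      refine sum_congr rfl fun j hj => ?_
      rw [mem_Icc] at hj
      rw [hratio j hj.1 hj.2, Nat.cast_sub (ratio_pos (hpos 0 (Nat.zero_le h)) hj.1),
        Nat.cast_one, mul_comm]
    omega
  exact two_mul_ncard_of_iff_not_reflect fun z hz =>
    inSemigroup_iff_not_inSemigroup_reflect hpos hgrow
      ((hθ (h + 1) (by omega) le_rfl).symm.trans hone) hc hz

/-- Let `Γ` be the numerical semigroup strictly generated by `r₀, …, r_h` with
divisor sequence `θ j = gcd(r₀,…,r_{j-1})`, `θ 1 > ⋯ > θ (h+1) = 1`.  Then the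
number of elements of `Γ` below the conductor
`c = −r₀ + 1 + Σ_{j=1}^h r_j (θ_j/θ_{j+1} − 1)` equals `c/2`. -/
theorem strictly_generated_semigroup_count_below_conductor (h : ℕ)
    (r θ : ℕ → ℕ) (c : ℕ)
    (hpos : ∀ j, j ≤ h → 0 < r j)
    (hθ : ∀ j, 1 ≤ j → j ≤ h + 1 → θ j = (Finset.range j).gcd r)
    (hdec : ∀ j, 1 ≤ j → j ≤ h → θ (j + 1) < θ j)
    (hone : θ (h + 1) = 1)
    (hstrict : ∀ j, 1 ≤ j → j + 1 ≤ h → (θ j / θ (j + 1)) * r j < r (j + 1))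
    (hcval : (c : ℤ) = -(r 0 : ℤ) + 1 +
        ∑ j ∈ Finset.Icc 1 h, (r j : ℤ) * ((θ j / θ (j + 1) : ℕ) - 1 : ℤ)) :
    2 * {z : ℕ | z < c ∧
        ∃ a : ℕ → ℕ, z = ∑ j ∈ Finset.range (h + 1), a j * r j}.ncard = c :=
  strictly_generated_semigroup_count_below_conductor_general h r θ c hpos hθ hone hstrict hcval
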